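/- The behavior policy μ* reduces variance step-wise compared with on-policy evaluation: for every time step t and every state s, Var(G^PDIS(τ^{μ*_{t:T−1}}_{t:T−1}) | S_t = s) ≤ Var(G^PDIS(τ^{π_{t:T−1}}_{t:T−1}) | S_t = s), where the left-hand variance is over trajectories generated by μ* from s and the right-hand variance is over trajectories generated by π from s (for which all importance ratios equal 1). -/

import Mathlib

open Finset

section MDPDefs

variable {S A : Type} [Fintype S] [Fintype A]

/-- State value `v_{π,t}(s)` of policy `π` for reward `r`, with `n` remaining steps at
time `t`; the paper's `v_{π,t}(s)` (horizon `T`) is `vval p r π (T − t) t s`. -/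
noncomputable def vval (p : S → A → S → ℝ) (r : S → A → ℝ) (π : ℕ → S → A → ℝ) :
    ℕ → ℕ → S → ℝ
  | 0, _, _ => 0
  | n + 1, t, s => ∑ a, π t s a * (r s a + ∑ s', p s a s' * vval p r π n (t + 1) s')

/-- Action value `q_{π,t}(s,a) = r(s,a) + ∑_{s'} p(s'|s,a) v_{π,t+1}(s')`, where `n`
steps remain after the current one; the paper's `q_{π,t}` is `qval p r π (T − t − 1) t`. -/
noncomputable def qval (p : S → A → S → ℝ) (r : S → A → ℝ) (π : ℕ → S → A → ℝ)
    (n t : ℕ) (s : S) (a : A) : ℝ :=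
  r s a + ∑ s', p s a s' * vval p r π n (t + 1) s'

/-- `ν_{π,t}(s,a) = Var_{s' ∼ p(·|s,a)}(v_{π,t+1}(s'))`, with `n = T − t − 1`
remaining steps after the current one (in particular `ν_{π,T−1} ≡ 0` since `v_{π,T} ≡ 0`). -/
noncomputable def nuVar (p : S → A → S → ℝ) (r : S → A → ℝ) (π : ℕ → S → A → ℝ)
    (n t : ℕ) (s : S) (a : A) : ℝ :=
  (∑ s', p s a s' * (vval p r π n (t + 1) s') ^ 2)
    - (∑ s', p s a s' * vval p r π n (t + 1) s') ^ 2

/-- Probability, under behavior policy `μ`, of the trajectory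
`τ = (A_t, S_{t+1}, A_{t+1}, …, S_{t+n})` of `n` steps starting from state `s` at
time `t`: actions `A_k ∼ μ_k(·|S_k)` and states `S_{k+1} ∼ p(·|S_k, A_k)`. -/
noncomputable def trajProb (p : S → A → S → ℝ) (μ : ℕ → S → A → ℝ) :
    (n : ℕ) → ℕ → S → (Fin n → A × S) → ℝ
  | 0, _, _, _ => 1
  | n + 1, t, s, τ =>
      μ t s (τ 0).1 * p s (τ 0).1 (τ 0).2 *
        trajProb p μ n (t + 1) (τ 0).2 (fun i => τ i.succ)

/-- PDIS return `G^PDIS(τ^{μ_{t:t+n−1}}_{t:t+n−1}) = ∑_{k=t}^{t+n−1} (∏_{j=t}^{k} ρ_j) R_{k+1}`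
(in its equivalent recursive form) along trajectory `τ` from state `s` at time `t`,
where `ρ_j = π_j(A_j|S_j)/μ_j(A_j|S_j)` and `R_{k+1} = r(S_k, A_k)`. -/
noncomputable def pdis (r : S → A → ℝ) (π μ : ℕ → S → A → ℝ) :
    (n : ℕ) → ℕ → S → (Fin n → A × S) → ℝ
  | 0, _, _, _ => 0
  | n + 1, t, s, τ =>
      π t s (τ 0).1 / μ t s (τ 0).1 *
        (r s (τ 0).1 + pdis r π μ n (t + 1) (τ 0).2 (fun i => τ i.succ))

/-- Conditional expectation `E[f(τ) | S_t = s]` over `n`-step trajectories generated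
by the behavior policy `μ` from state `s` at time `t`. -/
noncomputable def expTraj (p : S → A → S → ℝ) (μ : ℕ → S → A → ℝ) (n t : ℕ) (s : S)
    (f : (Fin n → A × S) → ℝ) : ℝ :=
  ∑ τ : Fin n → A × S, trajProb p μ n t s τ * f τ

/-- Conditional variance `Var(G^PDIS(τ^{μ_{t:T−1}}_{t:T−1}) | S_t = s)` with
`n = T − t` remaining steps. -/
noncomputable def pdisVar (p : S → A → S → ℝ) (r : S → A → ℝ) (π μ : ℕ → S → A → ℝ)
    (n t : ℕ) (s : S) : ℝ :=
  expTraj p μ n t s (fun τ => (pdis r π μ n t s τ) ^ 2)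
    - (expTraj p μ n t s (pdis r π μ n t s)) ^ 2

/-- Conditional variance `Var(G^PDIS(τ^{μ_{t+1:T−1}}_{t+1:T−1}) | S_t = s, A_t = a)`,
where `S_{t+1} ∼ p(·|s,a)` and then the trajectory is generated by `μ` from `S_{t+1}`;
here `n = T − t − 1`. -/
noncomputable def pdisVarSA (p : S → A → S → ℝ) (r : S → A → ℝ) (π μ : ℕ → S → A → ℝ)
    (n t : ℕ) (s : S) (a : A) : ℝ :=
  (∑ s', p s a s' * expTraj p μ n (t + 1) s' (fun τ => (pdis r π μ n (t + 1) s' τ) ^ 2))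
    - (∑ s', p s a s' * expTraj p μ n (t + 1) s' (pdis r π μ n (t + 1) s')) ^ 2

/-- Extended reward `r̃_t(s,a)` (horizon `T`) computed with continuation behavior
policy `μ`: `r̃_{T−1}(s,a) = r(s,a)²`, and for `t ≤ T−2`,
`r̃_t(s,a) = ν_{π,t}(s,a) + q_{π,t}(s,a)² + ∑_{s'} p(s'|s,a) Var(G^PDIS(τ^{μ_{t+1:T−1}}) | S_{t+1} = s')`. -/
noncomputable def rtilde (p : S → A → S → ℝ) (r : S → A → ℝ) (π μ : ℕ → S → A → ℝ)
    (T t : ℕ) (s : S) (a : A) : ℝ :=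
  if t + 1 = T then (r s a) ^ 2
  else
    nuVar p r π (T - t - 1) t s a + (qval p r π (T - t - 1) t s a) ^ 2
      + ∑ s', p s a s' * pdisVar p r π μ (T - t - 1) (t + 1) s'

/-- Total (unconditional) variance `Var(G^PDIS(τ^{μ_{0:T−1}}_{0:T−1}))` of the PDIS
estimator, including the randomness of the initial state `S_0 ∼ p0`. -/
noncomputable def pdisTotalVar (p : S → A → S → ℝ) (r : S → A → ℝ) (π μ : ℕ → S → A → ℝ)
    (p0 : S → ℝ) (T : ℕ) : ℝ :=
  (∑ s, p0 s * expTraj p μ T 0 s (fun τ => (pdis r π μ T 0 s τ) ^ 2))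
    - (∑ s, p0 s * expTraj p μ T 0 s (pdis r π μ T 0 s)) ^ 2

/-- Feasible set of the step-wise constrained problem at time `t` and state `s`:
probability distributions `ν` on `A` satisfying the coverage condition
`ν a = 0 → π_t(a|s) q_{π,t}(s,a) = 0` and the safety constraint
`∑ a, ν a * q^c_{μ*,t}(s,a) ≤ (1 + ε) v^c_{π,t}(s)`. -/
noncomputable def stepFeasible (p : S → A → S → ℝ) (r c : S → A → ℝ)
    (π μstar : ℕ → S → A → ℝ) (T : ℕ) (ε : ℝ) (t : ℕ) (s : S) : Set (A → ℝ) :=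
  {ν | (∀ a, 0 ≤ ν a) ∧ (∑ a, ν a) = 1 ∧
    (∀ a, ν a = 0 → π t s a * qval p r π (T - t - 1) t s a = 0) ∧
    (∑ a, ν a * qval p c μstar (T - t - 1) t s a) ≤ (1 + ε) * vval p c π (T - t) t s}

/-- Objective `∑_{a : ν a > 0} π_t(a|s)² r̃_t(s,a) / ν a` of the step-wise constrained
problem at time `t` and state `s`, where `r̃_t` is computed with continuation policy
`μ*_{t+1:T−1}`. -/
noncomputable def stepObj (p : S → A → S → ℝ) (r : S → A → ℝ) (π μstar : ℕ → S → A → ℝ)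
    (T t : ℕ) (s : S) (ν : A → ℝ) : ℝ :=
  ∑ a ∈ Finset.univ.filter (fun a => 0 < ν a),
    (π t s a) ^ 2 * rtilde p r π μstar T t s a / ν a

end MDPDefs

/-!
Backward induction on `t`. Conditioning on the first step shows that, under any behaviour
policy `μ` covering `π`, PDIS is unbiased for `v_π` and its conditional second moment is
`∑ a, μ a (π a / μ a)² r̃_t(s,a)`, where `r̃` is built from `μ`'s own continuation variance:
this is the step objective at `μ_t`. The safety constraint at `t + 1` reads
`v^c_{μ*} ≤ (1 + ε) v^c_π`, which makes `π_t` feasible at `t`, so `obj(μ*_t) ≤ obj(π_t)`.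
The induction hypothesis bounds the `r̃` of `μ*` by that of `π`, and the objective at `π_t`
computed with `π`'s `r̃` is the on-policy second moment. Both means equal `v_π`.
-/

open Finset

theorem Fintype.sum_pi_fin_succ {α β : Type*} [Fintype α] [AddCommMonoid β] (n : ℕ)
    (f : (Fin (n + 1) → α) → β) :
    ∑ τ, f τ = ∑ x, ∑ τ : Fin n → α, f (Fin.cons x τ) := by
  rw [← Equiv.sum_comp (Fin.consEquiv fun _ : Fin (n + 1) => α) f, Fintype.sum_prod_type]
  rfl

theorem sum_mul_const_add_of_sum_eq_one {ι : Type*} [Fintype ι] {w : ι → ℝ}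
    (hw : ∑ i, w i = 1) (c : ℝ) (f : ι → ℝ) :
    ∑ i, w i * (c + f i) = c + ∑ i, w i * f i := by
  simp only [mul_add, sum_add_distrib, ← sum_mul, hw, one_mul]

theorem mul_div_mul_of_eq_zero_imp {m a x : ℝ} (h : m = 0 → a * x = 0) :
    m * (a / m * x) = a * x := by
  rcases eq_or_ne m 0 with hm | hm
  · rw [hm, h hm, zero_mul]
  · rw [← mul_assoc, mul_div_cancel₀ _ hm]

theorem pdis_cons {S A : Type} (r : S → A → ℝ) (π μ : ℕ → S → A → ℝ) (n t : ℕ) (s : S)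
    (x : A × S) (τ : Fin n → A × S) :
    pdis r π μ (n + 1) t s (Fin.cons x τ)
      = π t s x.1 / μ t s x.1 * (r s x.1 + pdis r π μ n (t + 1) x.2 τ) := by
  simp only [pdis, Fin.cons_zero, Fin.cons_succ]

section PDIS

variable {S A : Type} [Fintype S] [Fintype A]

section expTraj

variable (p : S → A → S → ℝ) (μ : ℕ → S → A → ℝ) (n t : ℕ) (s : S)

theorem expTraj_succ (f : (Fin (n + 1) → A × S) → ℝ) :
    expTraj p μ (n + 1) t s f = ∑ a, μ t s a * ∑ s', p s a s' *
      expTraj p μ n (t + 1) s' (fun τ => f (Fin.cons (a, s') τ)) := by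
  simp only [expTraj, Fintype.sum_pi_fin_succ, Fintype.sum_prod_type, mul_sum]
  refine sum_congr rfl fun a _ => sum_congr rfl fun s' _ => sum_congr rfl fun τ _ => ?_
  simp only [trajProb, Fin.cons_zero, Fin.cons_succ]
  ring

theorem expTraj_add (f g : (Fin n → A × S) → ℝ) :
    expTraj p μ n t s (fun τ => f τ + g τ) = expTraj p μ n t s f + expTraj p μ n t s g := by
  simp only [expTraj, mul_add, sum_add_distrib]

theorem expTraj_const_mul (c : ℝ) (f : (Fin n → A × S) → ℝ) :
    expTraj p μ n t s (fun τ => c * f τ) = c * expTraj p μ n t s f := by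
  simp only [expTraj, mul_sum]
  exact sum_congr rfl fun τ _ => by ring

end expTraj

variable {p : S → A → S → ℝ} {T : ℕ}

theorem expTraj_const {μ : ℕ → S → A → ℝ} (hp1 : ∀ s a, ∑ s', p s a s' = 1)
    (hμ1 : ∀ k < T, ∀ s, ∑ a, μ k s a = 1) (n t : ℕ) (h : t + n = T) (s : S) (c : ℝ) :
    expTraj p μ n t s (fun _ => c) = c := by
  induction n generalizing t s with
  | zero => simp [expTraj, trajProb]
  | succ n ih =>
    simp only [expTraj_succ, ih (t + 1) (by omega), ← sum_mul, hp1, one_mul, hμ1 t (by omega)]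

/-- Coverage is required only where `π q_π ≠ 0`, which is all that unbiasedness of PDIS needs. -/
structure IsBehaviorPolicy (p : S → A → S → ℝ) (r : S → A → ℝ) (π μ : ℕ → S → A → ℝ)
    (T : ℕ) : Prop where
  nonneg : ∀ k < T, ∀ s a, 0 ≤ μ k s a
  sum_eq_one : ∀ k < T, ∀ s, ∑ a, μ k s a = 1
  covers : ∀ k < T, ∀ s a, μ k s a = 0 → π k s a * qval p r π (T - k - 1) k s a = 0

theorem isBehaviorPolicy_self {r : S → A → ℝ} {π : ℕ → S → A → ℝ}
    (hπ : ∀ t s, (∀ a, 0 ≤ π t s a) ∧ ∑ a, π t s a = 1) : IsBehaviorPolicy p r π π T where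
  nonneg k _ s := (hπ k s).1
  sum_eq_one k _ s := (hπ k s).2
  covers k _ s a h := by rw [h, zero_mul]

variable {r : S → A → ℝ} {π μ : ℕ → S → A → ℝ}

theorem expTraj_pdis (hp1 : ∀ s a, ∑ s', p s a s' = 1) (hμ : IsBehaviorPolicy p r π μ T)
    (n t : ℕ) (h : t + n = T) (s : S) :
    expTraj p μ n t s (pdis r π μ n t s) = vval p r π n t s := by
  induction n generalizing t s with
  | zero => simp [expTraj, pdis, vval]
  | succ n ih =>
    have hcov := hμ.covers t (by omega) s
    rw [show T - t - 1 = n by omega] at hcov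
    simp only [expTraj_succ, pdis_cons, expTraj_const_mul, expTraj_add,
      expTraj_const hp1 hμ.sum_eq_one n (t + 1) (by omega), ih (t + 1) (by omega)]
    refine sum_congr rfl fun a _ => ?_
    simp_rw [mul_left_comm (p s a _), ← mul_sum, sum_mul_const_add_of_sum_eq_one (hp1 s a)]
    exact mul_div_mul_of_eq_zero_imp (hcov a)

theorem rtilde_eq_sum (hp1 : ∀ s a, ∑ s', p s a s' = 1) (t : ℕ) (s : S) (a : A) :
    rtilde p r π μ T t s a = ∑ s', p s a s' *
      ((r s a + vval p r π (T - t - 1) (t + 1) s') ^ 2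
        + pdisVar p r π μ (T - t - 1) (t + 1) s') := by
  unfold rtilde
  split_ifs with hend
  · rw [show T - t - 1 = 0 by omega]
    simp [vval, pdisVar, expTraj, pdis, ← sum_mul, hp1]
  · have hexpand : ∀ s', p s a s' * ((r s a + vval p r π (T - t - 1) (t + 1) s') ^ 2
          + pdisVar p r π μ (T - t - 1) (t + 1) s')
        = r s a ^ 2 * p s a s' + 2 * r s a * (p s a s' * vval p r π (T - t - 1) (t + 1) s')
          + p s a s' * vval p r π (T - t - 1) (t + 1) s' ^ 2
          + p s a s' * pdisVar p r π μ (T - t - 1) (t + 1) s' := fun s' => by ring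
    simp only [hexpand, sum_add_distrib, ← mul_sum, hp1, nuVar, qval]
    ring

theorem expTraj_pdis_sq (hp1 : ∀ s a, ∑ s', p s a s' = 1) (hμ : IsBehaviorPolicy p r π μ T)
    (n t : ℕ) (h : t + (n + 1) = T) (s : S) :
    expTraj p μ (n + 1) t s (fun τ => pdis r π μ (n + 1) t s τ ^ 2)
      = ∑ a, μ t s a * ((π t s a / μ t s a) ^ 2 * rtilde p r π μ T t s a) := by
  have hsecond : ∀ s', expTraj p μ n (t + 1) s' (fun τ => pdis r π μ n (t + 1) s' τ ^ 2)
      = pdisVar p r π μ n (t + 1) s' + vval p r π n (t + 1) s' ^ 2 := fun s' => by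
    rw [pdisVar, expTraj_pdis hp1 hμ n (t + 1) (by omega)]
    ring
  simp only [expTraj_succ, pdis_cons, rtilde_eq_sum hp1 t, show T - t - 1 = n by omega]
  refine sum_congr rfl fun a _ => ?_
  congr 1
  rw [mul_sum]
  refine sum_congr rfl fun s' _ => ?_
  set K := π t s a / μ t s a
  have hexpand : (fun τ => (K * (r s a + pdis r π μ n (t + 1) s' τ)) ^ 2)
      = fun τ => K ^ 2 * r s a ^ 2 + (2 * K ^ 2 * r s a * pdis r π μ n (t + 1) s' τ
          + K ^ 2 * pdis r π μ n (t + 1) s' τ ^ 2) := by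
    funext τ
    ring
  simp only [hexpand, expTraj_add, expTraj_const_mul,
    expTraj_const hp1 hμ.sum_eq_one n (t + 1) (by omega), expTraj_pdis hp1 hμ n (t + 1) (by omega),
    hsecond]
  ring

theorem stepObj_eq_sum {ν : A → ℝ} (hν : ∀ a, 0 ≤ ν a) (t : ℕ) (s : S) :
    stepObj p r π μ T t s ν = ∑ a, ν a * ((π t s a / ν a) ^ 2 * rtilde p r π μ T t s a) := by
  rw [stepObj, sum_filter]
  refine sum_congr rfl fun a _ => ?_
  split_ifs with ha
  · field_simp
  · simp [(not_lt.1 ha).antisymm (hν a)]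

theorem pdisVar_succ (hp1 : ∀ s a, ∑ s', p s a s' = 1) (hμ : IsBehaviorPolicy p r π μ T)
    (n t : ℕ) (h : t + (n + 1) = T) (s : S) :
    pdisVar p r π μ (n + 1) t s = stepObj p r π μ T t s (μ t s) - vval p r π (n + 1) t s ^ 2 := by
  rw [pdisVar, expTraj_pdis_sq hp1 hμ n t h, expTraj_pdis hp1 hμ (n + 1) t h,
    stepObj_eq_sum (hμ.nonneg t (by omega) s)]

theorem stepObj_mono {μ' : ℕ → S → A → ℝ} {t : ℕ} {s : S}
    (h : ∀ a, rtilde p r π μ T t s a ≤ rtilde p r π μ' T t s a) (ν : A → ℝ) :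
    stepObj p r π μ T t s ν ≤ stepObj p r π μ' T t s ν :=
  sum_le_sum fun a ha => by
    gcongr
    · exact (mem_filter.1 ha).2.le
    · exact h a

theorem rtilde_mono {μ' : ℕ → S → A → ℝ} (hp0 : ∀ s a s', 0 ≤ p s a s') {t : ℕ}
    (h : ∀ s', pdisVar p r π μ (T - t - 1) (t + 1) s' ≤ pdisVar p r π μ' (T - t - 1) (t + 1) s')
    (s : S) (a : A) : rtilde p r π μ T t s a ≤ rtilde p r π μ' T t s a := by
  unfold rtilde
  split_ifs
  · exact le_rfl
  · gcongr with s'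
    exacts [hp0 s a s', h s']

theorem IsBehaviorPolicy.of_mem_stepFeasible {c : S → A → ℝ} {ε : ℝ}
    (h : ∀ k < T, ∀ s, μ k s ∈ stepFeasible p r c π μ T ε k s) : IsBehaviorPolicy p r π μ T where
  nonneg k hk s := (h k hk s).1
  sum_eq_one k hk s := (h k hk s).2.1
  covers k hk s := (h k hk s).2.2.1

section Cost

variable {c : S → A → ℝ} {ε : ℝ}

theorem qval_le_of_vval_le (hp0 : ∀ s a s', 0 ≤ p s a s') (hc : ∀ s a, 0 ≤ c s a) (hε : 0 ≤ ε)
    {n t : ℕ} (hv : ∀ s', vval p c μ n (t + 1) s' ≤ (1 + ε) * vval p c π n (t + 1) s')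
    (s : S) (a : A) : qval p c μ n t s a ≤ (1 + ε) * qval p c π n t s a :=
  calc qval p c μ n t s a
      = c s a + ∑ s', p s a s' * vval p c μ n (t + 1) s' := rfl
    _ ≤ (1 + ε) * c s a + ∑ s', p s a s' * ((1 + ε) * vval p c π n (t + 1) s') := by
        gcongr with s'
        · exact le_mul_of_one_le_left (hc s a) (by linarith)
        · exact hp0 s a s'
        · exact hv s'
    _ = (1 + ε) * qval p c π n t s a := by
        simp only [qval, mul_add, mul_sum, mul_left_comm (p s a _)]

theorem vval_le_of_mem_stepFeasible (h : ∀ k < T, ∀ s, μ k s ∈ stepFeasible p r c π μ T ε k s)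
    {t : ℕ} (ht : t ≤ T) (s : S) :
    vval p c μ (T - t) t s ≤ (1 + ε) * vval p c π (T - t) t s := by
  rcases ht.eq_or_lt with rfl | ht
  · simp [vval]
  · obtain ⟨n, hn⟩ : ∃ n, T - t = n + 1 := ⟨T - t - 1, by omega⟩
    have hsafe := (h t ht s).2.2.2
    rw [hn] at hsafe ⊢
    rwa [Nat.add_sub_cancel] at hsafe

theorem mem_stepFeasible_self (hp0 : ∀ s a s', 0 ≤ p s a s') (hc : ∀ s a, 0 ≤ c s a)
    (hε : 0 ≤ ε) {t : ℕ} (ht : t < T) {s : S} (hπ : (∀ a, 0 ≤ π t s a) ∧ ∑ a, π t s a = 1)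
    (hv : ∀ s', vval p c μ (T - t - 1) (t + 1) s' ≤ (1 + ε) * vval p c π (T - t - 1) (t + 1) s') :
    π t s ∈ stepFeasible p r c π μ T ε t s := by
  refine ⟨hπ.1, hπ.2, fun a h => by rw [h, zero_mul], ?_⟩
  obtain ⟨n, hn⟩ : ∃ n, T - t = n + 1 := ⟨T - t - 1, by omega⟩
  rw [hn, Nat.add_sub_cancel] at hv ⊢
  calc ∑ a, π t s a * qval p c μ n t s a
      ≤ ∑ a, π t s a * ((1 + ε) * qval p c π n t s a) := by
        gcongr with a
        exacts [hπ.1 a, qval_le_of_vval_le hp0 hc hε hv s a]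
    _ = (1 + ε) * vval p c π (n + 1) t s := by
        simp only [vval, qval, mul_sum, mul_left_comm (1 + ε)]

end Cost

end PDIS

theorem stepwise_variance_reduction_general
    {S A : Type} [Fintype S] [Fintype A]
    (T : ℕ)
    (p : S → A → S → ℝ) (r c : S → A → ℝ) (π μstar : ℕ → S → A → ℝ)
    (hp : ∀ s a, (∀ s', 0 ≤ p s a s') ∧ (∑ s', p s a s') = 1)
    (hπ : ∀ t s, (∀ a, 0 ≤ π t s a) ∧ (∑ a, π t s a) = 1)
    (hc : ∀ s a, 0 ≤ c s a)
    (ε : ℝ) (hε : 0 ≤ ε)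
    (hopt : ∀ t, t < T → ∀ s,
      μstar t s ∈ stepFeasible p r c π μstar T ε t s ∧
      ∀ ν ∈ stepFeasible p r c π μstar T ε t s,
        stepObj p r π μstar T t s (μstar t s) ≤ stepObj p r π μstar T t s ν) :
    ∀ t, t < T → ∀ s : S,
      pdisVar p r π μstar (T - t) t s ≤ pdisVar p r π π (T - t) t s := by
  have hp0 : ∀ s a s', 0 ≤ p s a s' := fun s a => (hp s a).1
  have hp1 : ∀ s a, ∑ s', p s a s' = 1 := fun s a => (hp s a).2
  have hfeas : ∀ k < T, ∀ s, μstar k s ∈ stepFeasible p r c π μstar T ε k s :=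
    fun k hk s => (hopt k hk s).1
  have hμ : IsBehaviorPolicy p r π μstar T := .of_mem_stepFeasible hfeas
  have hπμ : IsBehaviorPolicy p r π π T := isBehaviorPolicy_self hπ
  suffices h : ∀ n t, t + n = T → ∀ s, pdisVar p r π μstar n t s ≤ pdisVar p r π π n t s from
    fun t _ s => h (T - t) t (by omega) s
  intro n
  induction n with
  | zero => simp [pdisVar, expTraj, pdis]
  | succ n ih =>
    intro t h s
    have hπfeas : π t s ∈ stepFeasible p r c π μstar T ε t s :=
      mem_stepFeasible_self hp0 hc hε (by omega) (hπ t s) fun s' => by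
        simpa only [Nat.sub_sub] using vval_le_of_mem_stepFeasible hfeas (t := t + 1) (by omega) s'
    have hrtilde : ∀ a, rtilde p r π μstar T t s a ≤ rtilde p r π π T t s a :=
      rtilde_mono hp0 (fun s' => by
        simpa only [show T - t - 1 = n by omega] using ih (t + 1) (by omega) s') s
    rw [pdisVar_succ hp1 hμ n t h, pdisVar_succ hp1 hπμ n t h]
    gcongr
    exact ((hopt t (by omega) s).2 _ hπfeas).trans (stepObj_mono hrtilde _)

/-- **Step-wise variance reduction of the safety-constrained optimal behavior policy.**
In the constrained MDP, fix a safety parameter `ε ≥ 0` and let `μ*` be the behavior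
policy defined backward in time: for each `t` and `s`, `μ*_t(·|s)` is an optimal
solution of the step-wise constrained problem (minimize
`∑_{a : ν a > 0} π_t(a|s)² r̃_t(s,a) / ν a` subject to the simplex, coverage, and
safety constraints). Then `μ*` reduces variance step-wise compared with on-policy
evaluation: for every time step `t` and every state `s`,
`Var(G^PDIS(τ^{μ*_{t:T−1}}) | S_t = s) ≤ Var(G^PDIS(τ^{π_{t:T−1}}) | S_t = s)`. -/
theorem stepwise_variance_reduction
    {S A : Type} [Fintype S] [Fintype A]
    (T : ℕ) (hT : 1 ≤ T)
    (p : S → A → S → ℝ) (r c : S → A → ℝ) (π μstar : ℕ → S → A → ℝ)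
    (hp : ∀ s a, (∀ s', 0 ≤ p s a s') ∧ (∑ s', p s a s') = 1)
    (hπ : ∀ t s, (∀ a, 0 ≤ π t s a) ∧ (∑ a, π t s a) = 1)
    (hc : ∀ s a, 0 ≤ c s a)
    (ε : ℝ) (hε : 0 ≤ ε)
    (hopt : ∀ t, t < T → ∀ s,
      μstar t s ∈ stepFeasible p r c π μstar T ε t s ∧
      ∀ ν ∈ stepFeasible p r c π μstar T ε t s,
        stepObj p r π μstar T t s (μstar t s) ≤ stepObj p r π μstar T t s ν) :
    ∀ t, t < T → ∀ s : S,
      pdisVar p r π μstar (T - t) t s ≤ pdisVar p r π π (T - t) t s :=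
  stepwise_variance_reduction_general T p r c π μstar hp hπ hc ε hε hopt
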